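/- arXiv:2511.10827 — 4 statements merged into one kernel-verified Lean document; each statement's English description precedes it below -/
import Mathlib

section
/- Let m ≥ 1 and K ≥ 2 be natural numbers and let B = 2m−1. Then the probability distribution y on ℕ defined by y(0) = (m(K−2)+1)/(Km), y(i) = 1/(Km) for every i ∈ {1,2,…,2m−1}, and y(i) = 0 for every i ≥ 2m, is (B,K)-feasible. -/
open scoped BigOperators

/-- A probability distribution on ℕ. -/
def IsPMF (p : ℕ → ℝ) : Prop := (∀ i, 0 ≤ p i) ∧ (∑' i, p i) = 1

/-- Point mass distribution at `n`. -/
noncomputable def delta (n : ℕ) : ℕ → ℝ := fun i => if i = n then 1 else 0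

/-- Uniform distribution on the `m` odd numbers `1,3,…,2m-1`. -/
noncomputable def uo (m : ℕ) : ℕ → ℝ := fun i => if Odd i ∧ i < 2*m then (1:ℝ)/m else 0

/-- Uniform distribution on the `m+1` even numbers `0,2,…,2m`. -/
noncomputable def ue (m : ℕ) : ℕ → ℝ := fun i => if Even i ∧ i ≤ 2*m then (1:ℝ)/(m+1) else 0

/-- `(C,K)`-feasibility of a probability distribution `p` on ℕ: there is a probability
mass function `ξ` on the `K`-partitions of `C` such that for each `i`,
`∑_x ξ x * |{k : x k = i}| = K * p i`. -/
def Feasible (C K : ℕ) (p : ℕ → ℝ) : Prop :=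
  ∃ ξ : (Fin K → ℕ) → ℝ,
    (∀ x, 0 ≤ ξ x) ∧
    (∀ x, (∑ k, x k) ≠ C → ξ x = 0) ∧
    (∑' x, ξ x) = 1 ∧
    (∀ i : ℕ, (∑' x : Fin K → ℕ,
        ξ x * ((Finset.univ.filter (fun k => x k = i)).card : ℝ)) = K * p i)

/-! Take `ξ` uniform on the `m` partitions `(j, 2m-1-j, 0, …, 0)`, `0 ≤ j < m`. The first two
slots of these partitions run through `0, …, m-1` and `2m-1, …, m` respectively, so every value
below `2m` occurs exactly once in total, and the remaining `K-2` slots contribute `m(K-2)` zeros. -/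

open Finset

theorem Feasible.of_uniform_family {C K : ℕ} {p : ℕ → ℝ} {ι : Type*} (s : Finset ι)
    (hs : s.Nonempty) (P : ι → Fin K → ℕ) (hP : ∀ j ∈ s, ∑ k, P j k = C)
    (hcount : ∀ i, ∑ j ∈ s, (#{k | P j k = i} : ℝ) = #s * (K * p i)) :
    Feasible C K p := by
  classical
  have hs₀ : (#s : ℝ) ≠ 0 := by exact_mod_cast hs.card_pos.ne'
  have tsum_law : ∀ g : (Fin K → ℕ) → ℝ,
      ∑' x, (#{j ∈ s | P j = x} : ℝ) / #s * g x = (∑ j ∈ s, g (P j)) / #s := by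
    intro g
    rw [tsum_eq_sum (s := s.image P), sum_comp g P, sum_div]
    · simp only [nsmul_eq_mul, div_mul_eq_mul_div]
    · intro x hx
      simp_all
  -- `ξ` is the law of `P` under the uniform distribution on `s`.
  refine ⟨fun x => (#{j ∈ s | P j = x} : ℝ) / #s, fun x => by positivity, ?_, ?_, fun i => ?_⟩
  · intro x hx
    simp only [div_eq_zero_iff, Nat.cast_eq_zero, card_eq_zero, filter_eq_empty_iff]
    left
    rintro j hj rfl
    exact hx (hP j hj)
  · simpa [hs₀] using tsum_law 1
  · rw [tsum_law, hcount, mul_div_cancel_left₀ _ hs₀]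

def pairPart {n : ℕ} (a b : ℕ) : Fin (n + 2) → ℕ := Fin.cons a (Fin.cons b 0)

theorem sum_comp_pairPart {M : Type*} [AddCommMonoid M] {n : ℕ} (f : ℕ → M) (a b : ℕ) :
    ∑ k, f (pairPart (n := n) a b k) = f a + f b + n • f 0 := by
  simp [pairPart, Fin.sum_univ_succ, add_assoc]

theorem sum_range_add_reflect {M : Type*} [AddCommMonoid M] (g : ℕ → M) (m : ℕ) :
    ∑ j ∈ range m, (g j + g (2 * m - 1 - j)) = ∑ i ∈ range (2 * m), g i := by
  rw [two_mul, sum_range_add, sum_add_distrib, ← sum_range_reflect (fun j => g (m + j))]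
  congr 1
  refine sum_congr rfl fun j hj => ?_
  congr 1
  have := mem_range.mp hj
  omega

/-- For m ≥ 1, K ≥ 2 and B = 2m−1, the distribution with
y(0) = (m(K−2)+1)/(Km), y(i) = 1/(Km) for 1 ≤ i ≤ 2m−1, and y(i) = 0 for i ≥ 2m,
is (B,K)-feasible. -/
theorem stmt4 (m K : ℕ) (hm : 1 ≤ m) (hK : 2 ≤ K) :
    Feasible (2*m - 1) K (fun i =>
      if i = 0 then ((m:ℝ)*((K:ℝ)-2)+1)/((K:ℝ)*(m:ℝ))
      else if i < 2*m then 1/((K:ℝ)*(m:ℝ))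
      else 0) := by
  obtain ⟨n, rfl⟩ : ∃ n, K = n + 2 := ⟨K - 2, by omega⟩
  refine Feasible.of_uniform_family (range m) (nonempty_range_iff.mpr (by omega))
    (fun j => pairPart j (2 * m - 1 - j)) (fun j hj => ?_) (fun i => ?_)
  · have := mem_range.mp hj
    have hsum := sum_comp_pairPart (n := n) id j (2 * m - 1 - j)
    simp only [id, smul_zero, add_zero] at hsum
    omega
  · let δ : ℕ → ℝ := fun a => if a = i then 1 else 0
    have hcount : ∀ j, (#{k | pairPart (n := n) j (2 * m - 1 - j) k = i} : ℝ) =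
        δ j + δ (2 * m - 1 - j) + n * δ 0 := fun j => by
      rw [natCast_card_filter, sum_comp_pairPart δ, nsmul_eq_mul]
    simp only [hcount, sum_add_distrib, sum_range_add_reflect δ, sum_const, card_range, δ,
      sum_ite_eq', mem_range, nsmul_eq_mul]
    have hm' : (m : ℝ) ≠ 0 := by positivity
    split_ifs <;> first | omega | (push_cast; field_simp; ring)
end

section
/- Let m ≥ 1 be an integer and let α, b, c be reals with 0 < α < 1/2, 0 < b ≤ m, and 0 < c ≤ b/(m+1). Set v = 1 − (1−α)b/m − αb/(m+1) + αc/(m(m+1)). Then: (i) for every probability distribution q on ℕ with mean b and Σ_{i≥0} q(2i+1) ≥ c, one has H(x^{m,α}, q) ≥ v; and (ii) the probability distribution y = (1 − b/m)·δ_0 + c·u^o_m + (b/m − c)·u^e_m has mean b and satisfies Σ_{i≥0} y(2i+1) = c, and for every probability distribution p on ℕ with mean m+α, one has H(p, y) ≤ v. In particular, v is the value of the constrained General Lotto game in which player A chooses a distribution on ℕ with mean m+α and player B chooses a distribution on ℕ with mean b whose total mass on odd numbers is at least c. -/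
open scoped BigOperators

/-- `p` has (finite) mean `b`. -/
def HasMean (p : ℕ → ℝ) (b : ℝ) : Prop :=
  Summable (fun i : ℕ => (i:ℝ) * p i) ∧ (∑' i : ℕ, (i:ℝ) * p i) = b

/-- The General Lotto payoff
`H(p,q) = Σ_{(i,j): i>j} p i · q j − Σ_{(i,j): i<j} p i · q j`. -/
noncomputable def Hpay (p q : ℕ → ℝ) : ℝ :=
  (∑' ij : ℕ × ℕ, if ij.2 < ij.1 then p ij.1 * q ij.2 else 0)
  - (∑' ij : ℕ × ℕ, if ij.1 < ij.2 then p ij.1 * q ij.2 else 0)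

/-- The distribution x^{m,α}: x(2i−1) = (m+1−2iα)/(m(m+1)), x(2i) = 2iα/(m(m+1))
for i = 1,…,m, and 0 elsewhere. -/
noncomputable def xma (m : ℕ) (α : ℝ) : ℕ → ℝ := fun j =>
  if j = 0 then 0
  else if j ≤ 2*m then
    (if j % 2 = 1 then ((m:ℝ) + 1 - ((j:ℝ)+1)*α) / ((m:ℝ)*((m:ℝ)+1))
     else (j:ℝ)*α / ((m:ℝ)*((m:ℝ)+1)))
  else 0

/-!
Against a distribution `y`, the pure strategy `i` earns `purePayoff y i`, and `H(p, y)` is the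
`p`-average of these pure payoffs. So both halves reduce to pointwise bounds on pure payoffs,
which average out using only the mean constraint and, in (i), the odd mass. Against `y` the
payoff of `i` is at most an affine function `A + B i` (with equality for `1 ≤ i ≤ 2m`) for which
`A + B (m + α) = v`. Against `x^{m,α}` the payoff of `j` is at most `-1 + κ j - γ [j odd]` with
`γ ≥ 0` (with equality for `j ≤ 2m`; `α ≤ 1/2` handles `j > 2m`), so
`H(x, q) = -H(q, x) ≥ 1 - κ b + γ c = v`.
-/

section LottoPayoff

open Finset

variable {p y : ℕ → ℝ}

/-- The payoff `H(δ_i, y)` of the pure strategy `i` against a distribution `y`: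
`P(Y < i) - P(Y > i) = F(i) - (1 - F(i+1))` with `F(n) = ∑_{j<n} y j`. -/
noncomputable def purePayoff (y : ℕ → ℝ) (i : ℕ) : ℝ :=
  ∑ j ∈ range i, y j + ∑ j ∈ range (i + 1), y j - 1

theorem tsum_eq_sum_range_of_eq_zero {f : ℕ → ℝ} {N : ℕ} (hf : ∀ j, N ≤ j → f j = 0) :
    ∑' j, f j = ∑ j ∈ range N, f j :=
  tsum_eq_sum fun j hj => hf j (by simpa using hj)

theorem IsPMF.summable (hy : IsPMF y) : Summable y := by
  by_contra h
  simpa [tsum_eq_zero_of_not_summable h] using hy.2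

theorem IsPMF.sum_range_mem_Icc (hy : IsPMF y) (n : ℕ) : ∑ j ∈ range n, y j ∈ Set.Icc 0 1 :=
  ⟨sum_nonneg fun j _ => hy.1 j, hy.2 ▸ hy.summable.sum_le_tsum _ fun j _ => hy.1 j⟩

theorem IsPMF.sum_range_eq_one {N : ℕ} (hy : IsPMF y) (hN : ∀ j, N ≤ j → y j = 0)
    {n : ℕ} (hn : N ≤ n) : ∑ j ∈ range n, y j = 1 := by
  rw [← hy.2, tsum_eq_sum_range_of_eq_zero fun j (hj : n ≤ j) => hN j (by omega)]

theorem IsPMF.abs_purePayoff_le_one (hy : IsPMF y) (i : ℕ) : |purePayoff y i| ≤ 1 := by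
  obtain ⟨h0, h1⟩ := hy.sum_range_mem_Icc i
  obtain ⟨h0', h1'⟩ := hy.sum_range_mem_Icc (i + 1)
  rw [purePayoff, abs_le]
  constructor <;> linarith

theorem IsPMF.purePayoff_eq_one {N : ℕ} (hy : IsPMF y) (hN : ∀ j, N ≤ j → y j = 0)
    {i : ℕ} (hi : N ≤ i) : purePayoff y i = 1 := by
  rw [purePayoff, hy.sum_range_eq_one hN hi, hy.sum_range_eq_one hN (by omega)]
  ring

theorem Hpay_comm (p q : ℕ → ℝ) : Hpay p q = -Hpay q p := by
  have swap : ∀ (P : ℕ → ℕ → Prop) [DecidableRel P],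
      (∑' ij : ℕ × ℕ, if P ij.1 ij.2 then p ij.1 * q ij.2 else 0)
        = ∑' ij : ℕ × ℕ, if P ij.2 ij.1 then q ij.1 * p ij.2 else 0 := by
    intro P _
    refine ((Equiv.prodComm ℕ ℕ).tsum_eq _).symm.trans (tsum_congr fun ij => ?_)
    by_cases h : P ij.2 ij.1 <;> simp [h, mul_comm]
  rw [Hpay, Hpay, swap (fun i j => j < i), swap (fun i j => i < j)]
  ring

theorem tsum_prod_ite_mul (P : ℕ → ℕ → Prop) [DecidableRel P] (hp : IsPMF p)
    (hy : IsPMF y) :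
    (∑' ij : ℕ × ℕ, if P ij.1 ij.2 then p ij.1 * y ij.2 else 0)
      = ∑' i, p i * ∑' j, if P i j then y j else 0 := by
  have hprod : Summable fun ij : ℕ × ℕ => p ij.1 * y ij.2 :=
    hp.summable.mul_of_nonneg hy.summable hp.1 hy.1
  have hite : ∀ ij : ℕ × ℕ, 0 ≤ if P ij.1 ij.2 then p ij.1 * y ij.2 else 0 := fun ij => by
    split_ifs
    exacts [mul_nonneg (hp.1 _) (hy.1 _), le_rfl]
  have hsum := hprod.of_nonneg_of_le hite fun ij => by
    split_ifs
    exacts [le_rfl, mul_nonneg (hp.1 _) (hy.1 _)]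
  rw [hsum.tsum_prod' fun i => hsum.comp_injective (Prod.mk_right_injective i)]
  refine tsum_congr fun i => ?_
  rw [← tsum_mul_left]
  exact tsum_congr fun j => by split_ifs <;> simp

theorem tsum_ite_lt (y : ℕ → ℝ) (i : ℕ) :
    (∑' j, if j < i then y j else 0) = ∑ j ∈ range i, y j := by
  rw [tsum_eq_sum (s := range i) fun j hj => by simp_all, ← sum_filter]
  congr 1
  ext j
  simp

theorem IsPMF.tsum_ite_gt (hy : IsPMF y) (i : ℕ) :
    (∑' j, if i < j then y j else 0) = 1 - ∑ j ∈ range (i + 1), y j := by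
  have hfin : ∀ j ∉ range (i + 1), (if i < j then 0 else y j) = 0 := fun j hj => by
    simp at hj; simp [show i < j by omega]
  have hle : (∑' j, if i < j then 0 else y j) = ∑ j ∈ range (i + 1), y j := by
    rw [tsum_eq_sum hfin]
    exact sum_congr rfl fun j hj => by simp at hj; simp [show ¬ i < j by omega]
  rw [← hy.2, ← hle, ← hy.summable.tsum_sub (summable_of_ne_finset_zero hfin)]
  exact tsum_congr fun j => by split_ifs <;> ring

theorem IsPMF.summable_mul_of_abs_le_one {g : ℕ → ℝ} (hp : IsPMF p)
    (hg : ∀ i, |g i| ≤ 1) :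
    Summable fun i => p i * g i :=
  hp.summable.of_norm_bounded fun i => by
    rw [Real.norm_eq_abs, abs_mul, abs_of_nonneg (hp.1 i)]
    exact mul_le_of_le_one_right (hp.1 i) (hg i)

theorem Hpay_eq_tsum_mul_purePayoff (hp : IsPMF p) (hy : IsPMF y) :
    Hpay p y = ∑' i, p i * purePayoff y i := by
  have hF : ∀ n, |∑ j ∈ range n, y j| ≤ 1 := fun n =>
    abs_le.2 ⟨by linarith [(hy.sum_range_mem_Icc n).1], (hy.sum_range_mem_Icc n).2⟩
  rw [Hpay, tsum_prod_ite_mul (fun i j => j < i) hp hy,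
    tsum_prod_ite_mul (fun i j => i < j) hp hy]
  simp only [tsum_ite_lt, hy.tsum_ite_gt]
  rw [← Summable.tsum_sub (hp.summable_mul_of_abs_le_one hF)]
  · exact tsum_congr fun i => by rw [purePayoff]; ring
  · refine hp.summable_mul_of_abs_le_one fun i => ?_
    rw [abs_le]
    have := hy.sum_range_mem_Icc (i + 1)
    constructor <;> linarith [this.1, this.2]

theorem tsum_ite_odd (q : ℕ → ℝ) :
    (∑' i, if Odd i then q i else 0) = ∑' i, q (2 * i + 1) := by
  have hsupp : Function.support (fun i => if Odd i then q i else 0) ⊆ Set.range (2 * · + 1) :=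
    fun j hj => by
      obtain ⟨k, rfl⟩ : Odd j := by by_contra h; simp [h] at hj
      exact ⟨k, rfl⟩
  have hinj : Function.Injective (2 * · + 1 : ℕ → ℕ) := fun a b h => by simpa using h
  rw [← hinj.tsum_eq hsupp]
  simp

theorem Hpay_le_of_purePayoff_le {μ A B C : ℝ} (hp : IsPMF p) (hμ : HasMean p μ) (hy : IsPMF y)
    (h : ∀ i, purePayoff y i ≤ A + B * i + if Odd i then C else 0) :
    Hpay p y ≤ A + B * μ + C * ∑' i, p (2 * i + 1) := by
  have hodd : Summable fun i => if Odd i then p i else 0 :=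
    hp.summable.of_nonneg_of_le (fun i => by split_ifs; exacts [hp.1 i, le_rfl])
      fun i => by split_ifs; exacts [le_rfl, hp.1 i]
  have hsplit : (fun i => p i * (A + B * i + if Odd i then C else 0))
      = fun i => A * p i + B * (i * p i) + C * if Odd i then p i else 0 := by
    ext i
    split_ifs <;> ring
  have hrhs : Summable fun i => p i * (A + B * i + if Odd i then C else 0) := by
    rw [hsplit]
    exact ((hp.summable.mul_left A).add (hμ.1.mul_left B)).add (hodd.mul_left C)
  calc Hpay p y = ∑' i, p i * purePayoff y i := Hpay_eq_tsum_mul_purePayoff hp hy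
    _ ≤ ∑' i, p i * (A + B * i + if Odd i then C else 0) :=
      (hp.summable_mul_of_abs_le_one hy.abs_purePayoff_le_one).tsum_le_tsum
        (fun i => mul_le_mul_of_nonneg_left (h i) (hp.1 i)) hrhs
    _ = A + B * μ + C * ∑' i, p (2 * i + 1) := by
      rw [hsplit, Summable.tsum_add ((hp.summable.mul_left A).add (hμ.1.mul_left B))
          (hodd.mul_left C), Summable.tsum_add (hp.summable.mul_left A) (hμ.1.mul_left B),
        tsum_mul_left, tsum_mul_left, tsum_mul_left, hp.2, hμ.2, tsum_ite_odd]
      ring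

end LottoPayoff

section StrategyX

open Finset

variable {m k : ℕ} {α : ℝ}

theorem xma_odd (hk : k < m) :
    xma m α (2 * k + 1) = (m + 1 - (2 * k + 2) * α) / (m * (m + 1)) := by
  rw [xma, if_neg (by omega), if_pos (by omega), if_pos (by omega)]
  push_cast
  ring_nf

theorem xma_even (hk : k < m) : xma m α (2 * k + 2) = (2 * k + 2) * α / (m * (m + 1)) := by
  rw [xma, if_neg (by omega), if_pos (by omega), if_neg (by omega)]
  push_cast
  ring_nf

theorem xma_eq_zero {j : ℕ} (hj : 2 * m < j) : xma m α j = 0 := by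
  rw [xma, if_neg (by omega), if_neg (by omega)]

theorem xma_nonneg (hα0 : 0 ≤ α) (hα1 : α ≤ 1 / 2) (j : ℕ) : 0 ≤ xma m α j := by
  unfold xma
  split_ifs with _ hj
  · exact le_rfl
  · have : (j : ℝ) ≤ 2 * m := by exact_mod_cast hj
    exact div_nonneg (by nlinarith) (by positivity)
  · positivity
  · exact le_rfl

theorem sum_range_xma (hk : k ≤ m) :
    ∑ j ∈ range (2 * k), xma m α j = k * (m + 1 - 2 * α) / (m * (m + 1)) ∧
      ∑ j ∈ range (2 * k + 1), xma m α j = k / m := by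
  induction k with
  | zero => simp [xma]
  | succ k ih =>
    obtain ⟨-, ih⟩ := ih (by omega)
    have hm : (m : ℝ) ≠ 0 := by norm_cast; omega
    constructor
    · rw [show 2 * (k + 1) = 2 * k + 1 + 1 by ring, sum_range_succ, ih, xma_odd (by omega)]
      push_cast
      field_simp
      ring
    · rw [show 2 * (k + 1) + 1 = 2 * k + 1 + 1 + 1 by ring, sum_range_succ, sum_range_succ, ih,
        xma_odd (by omega), show 2 * k + 1 + 1 = 2 * k + 2 by ring, xma_even (by omega)]
      push_cast
      field_simp
      ring

theorem isPMF_xma (hm : 1 ≤ m) (hα0 : 0 ≤ α) (hα1 : α ≤ 1 / 2) : IsPMF (xma m α) := by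
  refine ⟨xma_nonneg hα0 hα1, ?_⟩
  rw [tsum_eq_sum_range_of_eq_zero (N := 2 * m + 1) fun j hj => xma_eq_zero (by omega),
    (sum_range_xma le_rfl).2]
  exact div_self (by norm_cast; omega)

theorem purePayoff_xma_le (hm : 1 ≤ m) (hα0 : 0 ≤ α) (hα1 : α ≤ 1 / 2) (j : ℕ) :
    purePayoff (xma m α) j ≤
      -1 + ((1 - α) / m + α / (m + 1)) * j + if Odd j then -(α / (m * (m + 1))) else 0 := by
  by_cases hj : 2 * m + 1 ≤ j
  · rw [(isPMF_xma hm hα0 hα1).purePayoff_eq_one (fun i hi => xma_eq_zero (by omega)) hj]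
    have hκ : 0 ≤ (1 - α) / m + α / (m + 1) :=
      add_nonneg (div_nonneg (by linarith) (by positivity)) (by positivity)
    have hj' : (2 * m + 1 : ℝ) ≤ j := by exact_mod_cast hj
    have hκm : ((1 - α) / m + α / (m + 1)) * (2 * m + 1)
        = 2 + α / (m * (m + 1)) + (1 - 2 * α) / m := by
      field_simp
      ring
    have : 0 ≤ (1 - 2 * α) / m := div_nonneg (by linarith) (by linarith)
    have : -(α / (m * (m + 1))) ≤ if Odd j then -(α / (m * (m + 1))) else 0 := by
      split_ifs
      · exact le_rfl
      · exact neg_nonpos.2 (by positivity)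
    nlinarith
  obtain ⟨k, rfl | rfl⟩ := Nat.even_or_odd' j
  · rw [purePayoff, (sum_range_xma (by omega)).1, (sum_range_xma (by omega)).2, if_neg (by simp)]
    push_cast
    apply le_of_eq
    field_simp
    ring
  · rw [purePayoff, (sum_range_xma (k := k) (by omega)).2,
      show 2 * k + 1 + 1 = 2 * (k + 1) by ring, (sum_range_xma (by omega)).1, if_pos (by simp)]
    push_cast
    apply le_of_eq
    field_simp
    ring

end StrategyX

noncomputable def strategyY (m : ℕ) (b c : ℝ) : ℕ → ℝ :=
  fun i => (1 - b / m) * delta 0 i + c * uo m i + (b / m - c) * ue m i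

section StrategyY

open Finset

variable {m k : ℕ} {b c : ℝ}

theorem strategyY_zero : strategyY m b c 0 = 1 - b / m + (b / m - c) / (m + 1) := by
  simp [strategyY, delta, uo, ue, div_eq_mul_inv]

theorem strategyY_odd (hk : k < m) : strategyY m b c (2 * k + 1) = c / m := by
  simp [strategyY, delta, uo, ue, show 2 * k + 1 < 2 * m by omega, div_eq_mul_inv]

theorem strategyY_even (hk : k < m) :
    strategyY m b c (2 * k + 2) = (b / m - c) / (m + 1) := by
  have : Even (2 * k + 2) := ⟨k + 1, by ring⟩
  simp [strategyY, delta, uo, ue, this, show 2 * k + 2 ≤ 2 * m by omega, div_eq_mul_inv]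

theorem strategyY_eq_zero {j : ℕ} (hj : 2 * m < j) : strategyY m b c j = 0 := by
  simp [strategyY, delta, uo, ue, show j ≠ 0 by omega, show ¬ j < 2 * m by omega,
    show ¬ j ≤ 2 * m by omega]

theorem strategyY_nonneg (hm : 1 ≤ m) (hb0 : 0 ≤ b) (hb1 : b ≤ m) (hc0 : 0 ≤ c)
    (hc1 : c ≤ b / (m + 1)) (i : ℕ) : 0 ≤ strategyY m b c i := by
  have hm' : (0 : ℝ) < m := by exact_mod_cast hm
  have h1 : 0 ≤ 1 - b / m := sub_nonneg.2 (div_le_one_of_le₀ hb1 (Nat.cast_nonneg m))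
  have h2 : 0 ≤ b / m - c :=
    sub_nonneg.2 (hc1.trans (div_le_div_of_nonneg_left hb0 hm' (by linarith)))
  have : 0 ≤ delta 0 i := by unfold delta; positivity
  have : 0 ≤ uo m i := by unfold uo; positivity
  have : 0 ≤ ue m i := by unfold ue; positivity
  unfold strategyY
  positivity

theorem sum_range_strategyY (hk : k ≤ m) :
    ∑ j ∈ range (2 * k + 1), strategyY m b c j
      = 1 - b / m + k * (c / m) + (k + 1) * ((b / m - c) / (m + 1)) := by
  induction k with
  | zero => simp [strategyY_zero]
  | succ k ih =>
    rw [show 2 * (k + 1) + 1 = 2 * k + 1 + 1 + 1 by ring, sum_range_succ, sum_range_succ,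
      ih (by omega), strategyY_odd (by omega), show 2 * k + 1 + 1 = 2 * k + 2 by ring,
      strategyY_even (by omega)]
    push_cast
    ring

theorem sum_range_mul_strategyY (hk : k ≤ m) :
    ∑ j ∈ range (2 * k + 1), j * strategyY m b c j
      = k ^ 2 * (c / m) + k * (k + 1) * ((b / m - c) / (m + 1)) := by
  induction k with
  | zero => simp
  | succ k ih =>
    rw [show 2 * (k + 1) + 1 = 2 * k + 1 + 1 + 1 by ring, sum_range_succ, sum_range_succ,
      ih (by omega), strategyY_odd (by omega), show 2 * k + 1 + 1 = 2 * k + 2 by ring,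
      strategyY_even (by omega)]
    push_cast
    ring

theorem isPMF_strategyY (hm : 1 ≤ m) (hb0 : 0 ≤ b) (hb1 : b ≤ m) (hc0 : 0 ≤ c)
    (hc1 : c ≤ b / (m + 1)) : IsPMF (strategyY m b c) := by
  refine ⟨strategyY_nonneg hm hb0 hb1 hc0 hc1, ?_⟩
  have hm' : (m : ℝ) ≠ 0 := by norm_cast; omega
  rw [tsum_eq_sum_range_of_eq_zero (N := 2 * m + 1) fun j hj => strategyY_eq_zero (by omega),
    sum_range_strategyY le_rfl]
  field_simp
  ring

theorem hasMean_strategyY (hm : 1 ≤ m) : HasMean (strategyY m b c) b := by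
  have hfin : ∀ j, 2 * m + 1 ≤ j → (j : ℝ) * strategyY m b c j = 0 := fun j hj => by
    rw [strategyY_eq_zero (by omega), mul_zero]
  have hm' : (m : ℝ) ≠ 0 := by norm_cast; omega
  refine ⟨summable_of_ne_finset_zero (s := range (2 * m + 1)) fun j hj =>
    hfin j (by simp at hj; omega), ?_⟩
  rw [tsum_eq_sum_range_of_eq_zero hfin, sum_range_mul_strategyY le_rfl]
  field_simp
  ring

theorem tsum_strategyY_odd (hm : 1 ≤ m) : ∑' i, strategyY m b c (2 * i + 1) = c := by
  rw [tsum_eq_sum_range_of_eq_zero (N := m) fun i hi => strategyY_eq_zero (by omega),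
    sum_congr rfl fun i hi => strategyY_odd (by simpa using hi), sum_const, card_range,
    nsmul_eq_mul]
  field_simp

theorem purePayoff_strategyY_le (hm : 1 ≤ m) (hb0 : 0 ≤ b) (hb1 : b ≤ m) (hc0 : 0 ≤ c)
    (hc1 : c ≤ b / (m + 1)) (i : ℕ) :
    purePayoff (strategyY m b c) i
      ≤ 1 - 2 * b / m + (b / m - c) / (m + 1) + (b + c) / (m * (m + 1)) * i := by
  have heven : ∀ k < m, ∑ j ∈ range (2 * k + 2), strategyY m b c j
      = ∑ j ∈ range (2 * k + 1), strategyY m b c j + c / m := fun k hk => by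
    rw [sum_range_succ, strategyY_odd hk]
  by_cases hi : 2 * m + 1 ≤ i
  · rw [(isPMF_strategyY hm hb0 hb1 hc0 hc1).purePayoff_eq_one
      (fun j hj => strategyY_eq_zero (by omega)) hi]
    have hi' : (2 * m + 1 : ℝ) ≤ i := by exact_mod_cast hi
    have hB : 0 ≤ (b + c) / (m * (m + 1)) := by positivity
    have hAB : 1 - 2 * b / m + (b / m - c) / (m + 1) + (b + c) / (m * (m + 1)) * (2 * m + 1)
        = 1 + c / m := by
      field_simp
      ring
    have : 0 ≤ c / m := by positivity
    nlinarith
  obtain ⟨k, rfl | rfl⟩ := Nat.even_or_odd' i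
  · rcases k with _ | k
    · have : b / m ≤ 1 := div_le_one_of_le₀ hb1 (Nat.cast_nonneg m)
      simp only [purePayoff, mul_zero, zero_add, range_zero, sum_empty, sum_range_one,
        strategyY_zero, Nat.cast_zero, mul_div_assoc]
      linarith
    · rw [purePayoff, show 2 * (k + 1) = 2 * k + 2 by ring, heven k (by omega),
        show 2 * k + 2 + 1 = 2 * (k + 1) + 1 by ring, sum_range_strategyY (by omega),
        sum_range_strategyY (by omega)]
      push_cast
      apply le_of_eq
      field_simp
      ring
  · rw [purePayoff, show 2 * k + 1 + 1 = 2 * k + 2 by ring, heven k (by omega),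
      sum_range_strategyY (by omega)]
    push_cast
    apply le_of_eq
    field_simp
    ring

end StrategyY

/-- the value and optimal strategies of the constrained General
Lotto game for 0 < α < 1/2. -/
theorem stmt11 (m : ℕ) (hm : 1 ≤ m) (α b c : ℝ)
    (hα0 : 0 < α) (hα1 : α < 1/2) (hb0 : 0 < b) (hb1 : b ≤ (m:ℝ))
    (hc0 : 0 < c) (hc1 : c ≤ b/((m:ℝ)+1))
    (v : ℝ) (hv : v = 1 - (1-α)*b/(m:ℝ) - α*b/((m:ℝ)+1) + α*c/((m:ℝ)*((m:ℝ)+1))) :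
    (∀ q : ℕ → ℝ, IsPMF q → HasMean q b → c ≤ (∑' i : ℕ, q (2*i+1)) →
      v ≤ Hpay (xma m α) q) ∧
    (IsPMF (fun i => (1 - b/(m:ℝ)) * delta 0 i + c * uo m i + (b/(m:ℝ) - c) * ue m i) ∧
     HasMean (fun i => (1 - b/(m:ℝ)) * delta 0 i + c * uo m i + (b/(m:ℝ) - c) * ue m i) b ∧
     (∑' i : ℕ, ((1 - b/(m:ℝ)) * delta 0 (2*i+1) + c * uo m (2*i+1)
        + (b/(m:ℝ) - c) * ue m (2*i+1))) = c ∧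
     (∀ p : ℕ → ℝ, IsPMF p → HasMean p ((m:ℝ)+α) →
        Hpay p (fun i => (1 - b/(m:ℝ)) * delta 0 i + c * uo m i
          + (b/(m:ℝ) - c) * ue m i) ≤ v)) := by
  have hy := isPMF_strategyY hm hb0.le hb1 hc0.le hc1
  refine ⟨fun q hq hqb hqc => ?_, hy, hasMean_strategyY hm, tsum_strategyY_odd hm,
    fun p hp hpμ => ?_⟩
  · have hHq := Hpay_le_of_purePayoff_le hq hqb (isPMF_xma hm hα0.le hα1.le)
      (purePayoff_xma_le hm hα0.le hα1.le)
    have hγc := mul_le_mul_of_nonneg_left hqc (by positivity : 0 ≤ α / (m * (m + 1)))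
    have hveq : v = 1 - ((1 - α) / m + α / (m + 1)) * b + α / (m * (m + 1)) * c := by
      rw [hv]
      field_simp
      ring
    rw [Hpay_comm]
    linarith
  · show Hpay p (strategyY m b c) ≤ v
    have hHp := Hpay_le_of_purePayoff_le hp hpμ hy (C := 0) fun i => by
      simpa using purePayoff_strategyY_le hm hb0.le hb1 hc0.le hc1 i
    have hveq : 1 - 2 * b / m + (b / m - c) / (m + 1) + (b + c) / (m * (m + 1)) * (m + α) = v := by
      rw [hv]
      field_simp
      ring
    linarith
end

section
/- Let m ≥ 1 and K ≥ 2 be natural numbers and let C = mK. Then the distribution u^o_m is (C,K)-feasible if and only if C ≡ K (mod 2). -/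
open scoped BigOperators

/-!
Both directions come from reading a feasible `ξ` as a random partition. Every part of a
partition in the support of `ξ` lies in the support of `p`, so for `u^o_m` all `K` parts are
odd and `C ≡ K (mod 2)`. Conversely, take a `K × m` Kotzig array: rows `π k` permuting
`{0, …, m-1}` with constant column sums. The `m` partitions `k ↦ 2 π k j + 1` (one per
column `j`) all have the same sum, which double counting identifies as `mK`, and each row
contributes every odd number below `2m` once, so the uniform mixture of the columns realises
`u^o_m`. Kotzig arrays exist when `K` is even (pair each row with its reversal) and when `m`
is odd and `K ≥ 3` (a `3 × m` array padded with such pairs).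
-/

open Finset

section Feasible

variable {C K : ℕ} {p : ℕ → ℝ}

lemma tsum_card_fiber_mul {ι α : Type*} [Fintype ι] [DecidableEq α] (P : ι → α) (f : α → ℝ) :
    ∑' x, (#{j | P j = x} : ℝ) * f x = ∑ j, f (P j) := by
  rw [Finset.sum_comp, tsum_eq_sum (s := univ.image P)]
  · simp only [nsmul_eq_mul]
  · intro x hx
    rw [filter_false_of_mem (by simpa using hx), card_empty, Nat.cast_zero, zero_mul]

lemma feasible_of_uniform_mixture {ι : Type*} [Fintype ι] [Nonempty ι] (P : ι → Fin K → ℕ)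
    (hsum : ∀ j, ∑ k, P j k = C)
    (hcount : ∀ i, ∑ j, (#{k | P j k = i} : ℝ) = Fintype.card ι * K * p i) :
    Feasible C K p := by
  have hcard : (Fintype.card ι : ℝ) ≠ 0 := by positivity
  refine ⟨fun x => #{j | P j = x} / Fintype.card ι, fun x => by positivity, ?_, ?_, fun i => ?_⟩
  · intro x hx
    dsimp only
    rw [filter_false_of_mem fun j _ (hj : P j = x) => hx (hj ▸ hsum j), card_empty,
      Nat.cast_zero, zero_div]
  · have htotal := tsum_card_fiber_mul P 1
    simp only [Pi.one_apply, mul_one, sum_const, card_univ, nsmul_eq_mul] at htotal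
    rw [tsum_div_const, htotal, div_self hcard]
  · simp_rw [div_mul_eq_mul_div, tsum_div_const, tsum_card_fiber_mul, hcount]
    field_simp

lemma Feasible.exists_pos (h : Feasible C K p) :
    ∃ x : Fin K → ℕ, ∑ k, x k = C ∧ ∀ k, 0 < p (x k) := by
  obtain ⟨ξ, hξ0, hξC, hξ1, hξp⟩ := h
  have hξ : Summable ξ := by
    by_contra h
    simp [tsum_eq_zero_of_not_summable h] at hξ1
  obtain ⟨x, hx⟩ : ∃ x, ξ x ≠ 0 := by
    by_contra! h
    simp [funext h] at hξ1
  refine ⟨x, not_not.mp (mt (hξC x) hx), fun k => ?_⟩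
  set n : (Fin K → ℕ) → ℝ := fun y => #{k' | y k' = x k}
  have hn : ∀ y, n y ≤ K := fun y => by
    simpa [n] using (card_filter_le univ fun k' => y k' = x k)
  have hsummable : Summable fun y => ξ y * n y :=
    (hξ.mul_right (K : ℝ)).of_nonneg_of_le (fun y => mul_nonneg (hξ0 y) (Nat.cast_nonneg _))
      fun y => mul_le_mul_of_nonneg_left (hn y) (hξ0 y)
  have hx_pos : 0 < ξ x * n x :=
    mul_pos ((hξ0 x).lt_of_ne' hx) (Nat.cast_pos.mpr (card_pos.mpr ⟨k, by simp⟩))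
  have : 0 < (K : ℝ) * p (x k) :=
    hξp (x k) ▸ hx_pos.trans_le
      (hsummable.le_tsum x fun y _ => mul_nonneg (hξ0 y) (Nat.cast_nonneg _))
  exact pos_of_mul_pos_right this (Nat.cast_nonneg K)

end Feasible

lemma sum_mod_two_of_odd {ι : Type*} {s : Finset ι} {x : ι → ℕ} (hx : ∀ k ∈ s, Odd (x k)) :
    (∑ k ∈ s, x k) % 2 = #s % 2 := by
  have h := Finset.odd_sum_iff_odd_card_odd (s := s) x
  rw [filter_true_of_mem hx, Nat.odd_iff, Nat.odd_iff] at h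
  omega

lemma odd_of_uo_pos {m i : ℕ} (h : 0 < uo m i) : Odd i := by
  unfold uo at h
  split_ifs at h with hi
  · exact hi.1
  · exact absurd h (lt_irrefl 0)

lemma natCast_mul_uo {m : ℕ} (hm : m ≠ 0) (i : ℕ) :
    (m : ℝ) * uo m i = #{j : Fin m | 2 * (j : ℕ) + 1 = i} := by
  unfold uo
  split_ifs with hi
  · obtain ⟨⟨r, rfl⟩, hr⟩ := hi
    rw [Finset.card_eq_one.mpr ⟨⟨r, by omega⟩, by ext j; simp [Fin.ext_iff]⟩, Nat.cast_one]
    field_simp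
  · rw [mul_zero, eq_comm, Nat.cast_eq_zero, card_eq_zero, filter_eq_empty_iff]
    intro j _ hj
    exact hi ⟨⟨j, hj.symm⟩, by omega⟩

lemma sum_card_filter_perm_apply {κ α : Type*} [Fintype κ] [Fintype α] (π : κ → Equiv.Perm α)
    (q : α → Prop) [DecidablePred q] :
    ∑ j, #{k | q (π k j)} = Fintype.card κ * #{j | q j} := by
  simp only [card_filter]
  rw [Finset.sum_comm]
  simp only [Equiv.sum_comp (π _) fun j => if q j then 1 else 0, sum_const, card_univ,
    smul_eq_mul]

def IsKotzigArray {K m : ℕ} (π : Fin K → Equiv.Perm (Fin m)) : Prop :=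
  ∃ c, ∀ j, ∑ k, (π k j : ℕ) = c

namespace IsKotzigArray

variable {K m : ℕ} {π : Fin K → Equiv.Perm (Fin m)}

lemma column_sum_mul_two {c : ℕ} (hm : 0 < m) (hc : ∀ j, ∑ k, (π k j : ℕ) = c) :
    c * 2 = K * (m - 1) := by
  have hrow : ∀ k, ∑ j, (π k j : ℕ) = ∑ j : Fin m, (j : ℕ) := fun k =>
    Equiv.sum_comp (π k) fun j => (j : ℕ)
  have htotal : m * c = K * ∑ j : Fin m, (j : ℕ) := by
    calc m * c = ∑ j, ∑ k, (π k j : ℕ) := by simp [hc]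
      _ = K * ∑ j : Fin m, (j : ℕ) := by rw [Finset.sum_comm]; simp [hrow]
  have hgauss := Finset.sum_range_id_mul_two m
  rw [← Fin.sum_univ_eq_sum_range (fun j => j) m] at hgauss
  apply Nat.eq_of_mul_eq_mul_left hm
  calc m * (c * 2) = K * ((∑ j : Fin m, (j : ℕ)) * 2) := by rw [← mul_assoc, htotal]; ring
    _ = m * (K * (m - 1)) := by rw [hgauss]; ring

lemma append {K' : ℕ} {π' : Fin K' → Equiv.Perm (Fin m)} (h : IsKotzigArray π)
    (h' : IsKotzigArray π') : IsKotzigArray (Fin.append π π') := by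
  obtain ⟨c, hc⟩ := h
  obtain ⟨c', hc'⟩ := h'
  exact ⟨c + c', fun j => by simp [Fin.sum_univ_add, hc, hc']⟩

lemma feasible_uo (hm : 0 < m) (h : IsKotzigArray π) : Feasible (m * K) K (uo m) := by
  obtain ⟨c, hc⟩ := h
  have hc2 := column_sum_mul_two hm hc
  have : NeZero m := ⟨hm.ne'⟩
  refine feasible_of_uniform_mixture (fun j k => 2 * (π k j : ℕ) + 1) (fun j => ?_) (fun i => ?_)
  · rw [sum_add_distrib, ← mul_sum, hc, sum_const, card_univ, Fintype.card_fin, smul_eq_mul,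
      mul_one, mul_comm 2, hc2, Nat.mul_sub_one,
      Nat.sub_add_cancel (Nat.le_mul_of_pos_right K hm), mul_comm]
  · rw [← Nat.cast_sum, sum_card_filter_perm_apply π fun j : Fin m => 2 * (j : ℕ) + 1 = i,
      Fintype.card_fin, Fintype.card_fin, Nat.cast_mul, ← natCast_mul_uo hm.ne']
    ring

end IsKotzigArray

lemma isKotzigArray_pairs (d m : ℕ) :
    IsKotzigArray (Fin.append (fun _ : Fin d => (1 : Equiv.Perm (Fin m)))
      fun _ : Fin d => Fin.revPerm) := by
  refine ⟨d * (m - 1), fun j => ?_⟩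
  simp only [Fin.sum_univ_add, Fin.append_left, Fin.append_right, Equiv.Perm.coe_one, id,
    Fin.revPerm_apply, Fin.val_rev, sum_const, card_univ, Fintype.card_fin, smul_eq_mul,
    ← mul_add]
  congr 1
  omega

noncomputable def shiftHalf (n : ℕ) : Equiv.Perm (Fin (2 * n + 1)) :=
  Equiv.ofBijective (fun j => ⟨if (j : ℕ) ≤ n then j + n else j - n - 1, by split_ifs <;> omega⟩)
    (Finite.injective_iff_bijective.mp fun a b h => by
      simp only [Fin.mk.injEq] at h
      ext
      split_ifs at h <;> omega)

noncomputable def negDouble (n : ℕ) : Equiv.Perm (Fin (2 * n + 1)) :=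
  Equiv.ofBijective
    (fun j => ⟨if (j : ℕ) ≤ n then 2 * n - 2 * j else 4 * n + 1 - 2 * j, by split_ifs <;> omega⟩)
    (Finite.injective_iff_bijective.mp fun a b h => by
      simp only [Fin.mk.injEq] at h
      ext
      split_ifs at h <;> omega)

/- The rows are `j`, `j + n` and `2n - 2j` modulo `2n + 1`; the column sum is `3n` both for
`j ≤ n` and for `j > n`. -/
lemma isKotzigArray_three (n : ℕ) : IsKotzigArray ![1, shiftHalf n, negDouble n] := by
  refine ⟨3 * n, fun j => ?_⟩
  simp only [Fin.sum_univ_three, Matrix.cons_val_zero, Matrix.cons_val_one, Matrix.cons_val_two,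
    Matrix.head_cons, Matrix.tail_cons, Equiv.Perm.coe_one, id, shiftHalf, negDouble,
    Equiv.ofBijective_apply]
  split_ifs <;> omega

lemma exists_isKotzigArray {K m : ℕ} (h : Even K ∨ Odd m ∧ 3 ≤ K) :
    ∃ π : Fin K → Equiv.Perm (Fin m), IsKotzigArray π := by
  rcases Nat.even_or_odd K with ⟨d, rfl⟩ | ⟨r, rfl⟩
  · exact ⟨_, isKotzigArray_pairs d m⟩
  · obtain ⟨⟨n, rfl⟩, hK⟩ := h.resolve_left (Nat.not_even_iff_odd.mpr ⟨r, rfl⟩)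
    obtain ⟨d, hd⟩ : ∃ d, 2 * r + 1 = 3 + (d + d) := ⟨r - 1, by omega⟩
    rw [hd]
    exact ⟨_, (isKotzigArray_three n).append (isKotzigArray_pairs d _)⟩

/-- For m ≥ 1, K ≥ 2 and C = mK, the distribution u^o_m is
(C,K)-feasible iff C ≡ K (mod 2). -/
theorem stmt15 (m K : ℕ) (hm : 1 ≤ m) (hK : 2 ≤ K) :
    Feasible (m*K) K (uo m) ↔ (m*K) % 2 = K % 2 := by
  constructor
  · intro h
    obtain ⟨x, hx, hpos⟩ := h.exists_pos
    simpa [hx] using sum_mod_two_of_odd (s := univ) fun k _ => odd_of_uo_pos (hpos k)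
  · intro hpar
    have hKotzig : Even K ∨ Odd m ∧ 3 ≤ K := by
      rcases Nat.even_or_odd K with hK2 | hK2
      · exact Or.inl hK2
      · rw [Nat.odd_iff] at hK2 ⊢
        refine Or.inr ⟨?_, by omega⟩
        rw [Nat.mul_mod, hK2, mul_one, Nat.mod_mod] at hpar
        omega
    obtain ⟨π, hπ⟩ := exists_isKotzigArray hKotzig
    exact hπ.feasible_uo hm
end

section
/- Let m ≥ 1 and K ≥ 2 be natural numbers and let C = mK. Then the distribution u^e_m is (C,K)-feasible if and only if C is even. -/
/-!
If `C` is odd, every partition of `C` has an odd part, while `u^e_m` gives no mass to odd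
numbers; the counting identity at that odd part forces `ξ` to vanish on every partition of `C`,
contradicting `∑ ξ = 1`.

Conversely, suppose `σ₁, …, σ_K` are permutations of `{0, …, m}` with
`σ₁ t + ⋯ + σ_K t = C / 2` for every `t`. Drawing `t` uniformly and taking the partition
`(2 σ₁ t, …, 2 σ_K t)` gives each coordinate the law `u^e_m`. Such permutations exist when
`C = mK` is even and `K ≥ 2`: pairs `(t, m - t)`, plus, when `K` is odd (so `m = 2n`), the triple
`(t, t + n, 2n - 2t)` taken modulo `2n + 1`, whose entries always add up to `3n`.
-/

open scoped BigOperators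

open Finset Equiv

section Mixture

variable {K C : ℕ} {J : Type*} [Fintype J]

theorem tsum_mixture_mul (w : J → ℝ) (x : J → Fin K → ℕ) (f : (Fin K → ℕ) → ℝ) :
    ∑' y, (∑ j, if y = x j then w j else 0) * f y = ∑ j, w j * f (x j) := by
  classical
  have hterm : ∀ y, (∑ j, if y = x j then w j else 0) * f y
      = ∑ j, if y = x j then w j * f (x j) else 0 := fun y => by
    rw [Finset.sum_mul]
    refine Finset.sum_congr rfl fun j _ => ?_
    split_ifs with h <;> simp [h]
  simp_rw [hterm]
  rw [Summable.tsum_finsetSum fun j _ => (hasSum_ite_eq (x j) _).summable]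
  exact Finset.sum_congr rfl fun j _ => tsum_ite_eq (x j) _

theorem feasible_of_mixture {p : ℕ → ℝ} (w : J → ℝ) (x : J → Fin K → ℕ)
    (hw : ∀ j, 0 ≤ w j) (hw_sum : ∑ j, w j = 1) (hx : ∀ j, ∑ k, x j k = C)
    (hcount : ∀ i, ∑ j, w j * (#{k | x j k = i} : ℝ) = K * p i) :
    Feasible C K p := by
  classical
  refine ⟨fun y => ∑ j, if y = x j then w j else 0, fun y => ?_, fun y hy => ?_, ?_,
    fun i => ?_⟩
  · exact Finset.sum_nonneg fun j _ => by split_ifs <;> simp [hw j]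
  · refine Finset.sum_eq_zero fun j _ => if_neg ?_
    rintro rfl
    exact hy (hx j)
  · simpa [hw_sum] using tsum_mixture_mul w x 1
  · rw [tsum_mixture_mul w x, hcount]

end Mixture

theorem mem_piFinset_range_of_sum_eq {K C : ℕ} {x : Fin K → ℕ} (hx : ∑ k, x k = C) :
    x ∈ Fintype.piFinset fun _ => range (C + 1) := by
  refine Fintype.mem_piFinset.mpr fun k => mem_range.mpr ?_
  have := Finset.single_le_sum (fun k _ => Nat.zero_le (x k)) (mem_univ k)
  omega

theorem even_of_feasible {C K : ℕ} {p : ℕ → ℝ} (hp : ∀ i, Odd i → p i = 0)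
    (h : Feasible C K p) : Even C := by
  classical
  obtain ⟨ξ, hξ, hξC, hξ_sum, hcount⟩ := h
  by_contra hC
  have hzero : ∀ x, ξ x = 0 := by
    intro x
    by_cases hx : ∑ k, x k ≠ C
    · exact hξC x hx
    rw [not_not] at hx
    obtain ⟨k, hk⟩ : ∃ k, Odd (x k) := by
      by_contra! hall
      exact hC (hx ▸ Finset.even_sum _ fun k _ => Nat.not_odd_iff_even.mp (hall k))
    have hsupp : ∀ y ∉ Fintype.piFinset fun _ => range (C + 1),
        ξ y * (#{l | y l = x k} : ℝ) = 0 := fun y hy => by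
      rw [hξC y (mt mem_piFinset_range_of_sum_eq hy), zero_mul]
    have hsum := hcount (x k)
    rw [hp _ hk, mul_zero, tsum_eq_sum hsupp,
      Finset.sum_eq_zero_iff_of_nonneg fun y _ => mul_nonneg (hξ y) (Nat.cast_nonneg _)] at hsum
    have hcard : (0 : ℝ) < #{l | x l = x k} := by
      exact_mod_cast Finset.card_pos.mpr ⟨k, by simp⟩
    exact (mul_eq_zero.mp (hsum x (mem_piFinset_range_of_sum_eq hx))).resolve_right hcard.ne'
  simp [hzero] at hξ_sum

def HasColumnSum {ι : Type*} [Fintype ι] {N : ℕ} (σ : ι → Perm (Fin N)) (s : ℕ) : Prop :=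
  ∀ t, ∑ i, (σ i t : ℕ) = s

namespace HasColumnSum

variable {ι κ : Type*} [Fintype ι] [Fintype κ] {N s s' : ℕ} {σ : ι → Perm (Fin N)}

theorem comp_equiv (hσ : HasColumnSum σ s) (e : κ ≃ ι) : HasColumnSum (σ ∘ e) s :=
  fun t => by
    simpa using (e.sum_comp fun i => (σ i t : ℕ)).trans (hσ t)

theorem sumElim (hσ : HasColumnSum σ s) {τ : κ → Perm (Fin N)} (hτ : HasColumnSum τ s') :
    HasColumnSum (Sum.elim σ τ) (s + s') := fun t => by
  simp [Fintype.sum_sum_type, hσ t, hτ t]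

theorem replicate (hσ : HasColumnSum σ s) (a : ℕ) :
    HasColumnSum (fun p : Fin a × ι => σ p.2) (a * s) := fun t => by
  simp [Fintype.sum_prod_type, hσ t]

end HasColumnSum

theorem hasColumnSum_one_revPerm (m : ℕ) :
    HasColumnSum ![1, (Fin.revPerm : Perm (Fin (m + 1)))] m := fun t => by
  rw [Fin.sum_univ_two]
  simp only [Matrix.cons_val_zero, Matrix.cons_val_one, Matrix.cons_val_fin_one, Perm.coe_one,
    id_eq, Fin.revPerm_apply, Fin.val_rev]
  omega

theorem exists_perm_val_eq {N : ℕ} (f : ℕ → ℕ) (hf : ∀ j < N, f j < N)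
    (hinj : Set.InjOn f (Set.Iio N)) : ∃ τ : Perm (Fin N), ∀ t, (τ t : ℕ) = f t := by
  let g : Fin N → Fin N := fun t => ⟨f t, hf t t.2⟩
  have hg : Function.Injective g := fun s t h =>
    Fin.ext (hinj s.2 t.2 (congrArg Fin.val h))
  exact ⟨Equiv.ofBijective g (Finite.injective_iff_bijective.mp hg), fun t => rfl⟩

theorem exists_hasColumnSum_triple (n : ℕ) :
    ∃ σ : Fin 3 → Perm (Fin (n + n + 1)), HasColumnSum σ (3 * n) := by
  obtain ⟨τ₁, hτ₁⟩ := exists_perm_val_eq (N := n + n + 1)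
    (fun j => if j ≤ n then j + n else j - (n + 1))
    (fun j hj => by split_ifs <;> omega)
    fun i hi j hj h => by simp only [Set.mem_Iio] at hi hj h; split_ifs at h <;> omega
  obtain ⟨τ₂, hτ₂⟩ := exists_perm_val_eq (N := n + n + 1)
    (fun j => if j ≤ n then 2 * n - 2 * j else 4 * n + 1 - 2 * j)
    (fun j hj => by split_ifs <;> omega)
    fun i hi j hj h => by simp only [Set.mem_Iio] at hi hj h; split_ifs at h <;> omega
  refine ⟨![1, τ₁, τ₂], fun t => ?_⟩
  simp only [Fin.sum_univ_three, Matrix.cons_val, Perm.coe_one, id, hτ₁, hτ₂]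
  split_ifs <;> omega

theorem card_filter_two_mul_perm_eq {m : ℕ} (τ : Perm (Fin (m + 1))) (i : ℕ) :
    (#{t | 2 * (τ t : ℕ) = i} : ℝ) = (m + 1) * ue m i := by
  rw [Finset.card_filter, Equiv.sum_comp τ fun t => if 2 * (t : ℕ) = i then 1 else 0, ue]
  split_ifs with hi
  · obtain ⟨⟨r, rfl⟩, hr⟩ := hi
    rw [sum_eq_single_of_mem ⟨r, by omega⟩ (mem_univ _)
      fun t _ ht => if_neg fun h => ht (Fin.ext (by simp only; omega)), if_pos (two_mul r)]
    field_simp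
    simp
  · rw [mul_zero, Nat.cast_eq_zero]
    exact sum_eq_zero fun t _ => if_neg fun h => hi ⟨⟨t, by omega⟩, by omega⟩

theorem feasible_ue_of_hasColumnSum {K m s : ℕ} {σ : Fin K → Perm (Fin (m + 1))}
    (hσ : HasColumnSum σ s) : Feasible (2 * s) K (ue m) := by
  refine feasible_of_mixture (fun _ => 1 / (m + 1 : ℝ)) (fun t k => 2 * (σ k t : ℕ))
    (fun _ => by positivity) ?_ (fun t => by rw [← mul_sum, hσ t]) fun i => ?_
  · simp only [sum_const, card_univ, Fintype.card_fin, nsmul_eq_mul, Nat.cast_succ]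
    field_simp
  have hswap : ∑ t, (#{k | 2 * (σ k t : ℕ) = i} : ℝ)
      = ∑ k, (#{t | 2 * (σ k t : ℕ) = i} : ℝ) := by
    simp only [Finset.card_filter, Nat.cast_sum]
    exact Finset.sum_comm
  rw [← mul_sum, hswap]
  simp only [card_filter_two_mul_perm_eq, sum_const, card_univ, Fintype.card_fin, nsmul_eq_mul]
  field_simp

theorem exists_hasColumnSum {m K : ℕ} (hK : 2 ≤ K) (h : Even (m * K)) :
    ∃ σ : Fin K → Perm (Fin (m + 1)), ∃ s, HasColumnSum σ s ∧ 2 * s = m * K := by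
  have hpair := hasColumnSum_one_revPerm m
  rcases Nat.even_or_odd K with ⟨a, rfl⟩ | ⟨a, rfl⟩
  · have hcard : Fintype.card (Fin a × Fin 2) = a + a := by
      simp only [Fintype.card_prod, Fintype.card_fin]
      ring
    exact ⟨_, _, (hpair.replicate a).comp_equiv (Fintype.equivFinOfCardEq hcard).symm, by ring⟩
  · obtain ⟨n, rfl⟩ : Even m :=
      (Nat.even_mul.mp h).resolve_right (Nat.not_even_iff_odd.mpr (odd_two_mul_add_one a))
    obtain ⟨τ, hτ⟩ := exists_hasColumnSum_triple n
    have ha : 1 ≤ a := by omega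
    refine ⟨_, _, ((hpair.replicate (a - 1)).sumElim hτ).comp_equiv
      (Fintype.equivFinOfCardEq ?_).symm, ?_⟩
    · simp only [Fintype.card_sum, Fintype.card_prod, Fintype.card_fin]
      omega
    · zify [ha]
      ring

theorem stmt16_general (m K : ℕ) (hK : 2 ≤ K) :
    Feasible (m*K) K (ue m) ↔ Even (m*K) := by
  refine ⟨even_of_feasible fun i hi => ?_, fun h => ?_⟩
  · rw [ue, if_neg fun h => Nat.not_even_iff_odd.mpr hi h.1]
  · obtain ⟨σ, s, hσ, hs⟩ := exists_hasColumnSum hK h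
    exact hs ▸ feasible_ue_of_hasColumnSum hσ

/-- For m ≥ 1, K ≥ 2 and C = mK, the distribution u^e_m is
(C,K)-feasible iff C is even. -/
theorem stmt16 (m K : ℕ) (hm : 1 ≤ m) (hK : 2 ≤ K) :
    Feasible (m*K) K (ue m) ↔ Even (m*K) :=
  stmt16_general m K hK
end
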